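/- arXiv:0912.1580 — 2 statements merged into one kernel-verified Lean document; each statement's English description precedes it below -/
import Mathlib

section
/- Let E be a real inner product space, let u ∈ E with ‖u‖ = 1, and let p ∈ E. Then the function t ↦ ‖p − t•u‖ − t tends to −⟪p, u⟫ as t → ∞. -/
open Filter Topology

/- Completing the square, `√(t² + b t + c) - (t + b/2) = (c - b²/4) / (√(t² + b t + c) + t + b/2)`,
a constant over a denominator that tends to infinity. -/
theorem Real.tendsto_sqrt_quadratic_sub_atTop (b c : ℝ) :
    Tendsto (fun t : ℝ => √(t ^ 2 + b * t + c) - t) atTop (𝓝 (b / 2)) := by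
  have hquad : Tendsto (fun t : ℝ => t ^ 2 + b * t + c) atTop atTop := by
    have := (tendsto_id.atTop_mul_atTop₀ (tendsto_atTop_add_const_right atTop b tendsto_id))
    exact tendsto_atTop_add_const_right atTop c (this.congr fun t => by simp only [id_eq]; ring)
  have hshift : Tendsto (fun t : ℝ => t + b / 2) atTop atTop :=
    tendsto_atTop_add_const_right atTop _ tendsto_id
  have hden : Tendsto (fun t : ℝ => √(t ^ 2 + b * t + c) + (t + b / 2)) atTop atTop :=
    tendsto_atTop_mono (fun t => le_add_of_nonneg_left (Real.sqrt_nonneg _)) hshift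
  have hsquare : ∀ᶠ t in atTop,
      (c - b ^ 2 / 4) / (√(t ^ 2 + b * t + c) + (t + b / 2)) =
        √(t ^ 2 + b * t + c) - t - b / 2 := by
    filter_upwards [hquad.eventually_ge_atTop 0, hshift.eventually_gt_atTop 0] with t hq ht
    rw [div_eq_iff (by positivity)]
    nlinarith [Real.sq_sqrt hq]
  have hzero := (tendsto_const_nhds (x := c - b ^ 2 / 4)).div_atTop hden
  simpa using ((hzero.congr' hsquare).add_const (b / 2))

/-- The Busemann function of the ray `c(t) = t • u` in a real inner product space:
`‖p - t•u‖ - t → -⟪p, u⟫` as `t → ∞`. -/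
theorem ballhull_stmt1 {E : Type*} [NormedAddCommGroup E] [InnerProductSpace ℝ E]
    (u : E) (hu : ‖u‖ = 1) (p : E) :
    Tendsto (fun t : ℝ => ‖p - t • u‖ - t) atTop (nhds (-(inner ℝ p u : ℝ))) := by
  have hnorm (t : ℝ) : ‖p - t • u‖ = √(t ^ 2 + (-2 * inner ℝ p u) * t + ‖p‖ ^ 2) := by
    rw [← Real.sqrt_sq (norm_nonneg _), norm_sub_sq_real, norm_smul, inner_smul_right,
      Real.norm_eq_abs, hu, mul_one, sq_abs]
    ring_nf
  simp_rw [hnorm]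
  convert Real.tendsto_sqrt_quadratic_sub_atTop (-2 * inner ℝ p u) (‖p‖ ^ 2) using 2
  ring
end

section
/- Let p be a 2×2 real symmetric positive definite matrix with det p = 1, and let λ₁ ≥ λ₂ > 0 be its eigenvalues. Then √((log λ₁)² + (log λ₂)²) = √2 · log( (tr p)/2 + √( ((tr p)/2)² − 1 ) ). In other words, the Riemannian distance d(p, I) in PD(2) equals √2 times the hyperbolic distance arcosh((tr p)/2). -/
open Matrix

/-! The eigenvalues of `p` are `λ` and `λ⁻¹` with `λ ≥ 1`, so `tr p / 2 = cosh (log λ)`, whence the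
right-hand side is `√2 · arcosh (cosh (log λ)) = √2 · log λ`; the left-hand side is
`√((log λ)² + (-log λ)²)`, which is the same. -/

namespace Matrix.IsHermitian

variable {𝕜 n : Type*} [RCLike 𝕜] [Fintype n] [DecidableEq n] {A : Matrix n n 𝕜}

theorem det_eq_multiset_prod_eigenvalues (hA : A.IsHermitian) :
    A.det = ((Finset.univ.val.map hA.eigenvalues).prod : 𝕜) := by
  rw [hA.det_eq_prod_eigenvalues, ← RCLike.ofReal_prod, Finset.prod_eq_multiset_prod]

theorem trace_eq_multiset_sum_eigenvalues (hA : A.IsHermitian) :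
    A.trace = ((Finset.univ.val.map hA.eigenvalues).sum : 𝕜) := by
  rw [hA.trace_eq_sum_eigenvalues, ← RCLike.ofReal_sum, Finset.sum_eq_multiset_sum]

end Matrix.IsHermitian

theorem Real.arcosh_add_inv_div_two {x : ℝ} (hx : 1 ≤ x) :
    Real.arcosh ((x + x⁻¹) / 2) = Real.log x := by
  rw [← Real.cosh_log (by positivity), Real.arcosh_cosh (Real.log_nonneg hx)]

/-- For a 2×2 real symmetric positive definite matrix `p` with `det p = 1` and
eigenvalues `l1 ≥ l2 > 0`, the Riemannian distance from `p` to `I`, namely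
`√((log l1)² + (log l2)²)`, equals `√2 · log(tr p / 2 + √((tr p / 2)² - 1))`,
i.e. `√2` times the hyperbolic distance `arcosh(tr p / 2)`. -/
theorem ballhull_stmt5 (p : Matrix (Fin 2) (Fin 2) ℝ) (hp : p.PosDef) (hdet : p.det = 1)
    (l1 l2 : ℝ) (hord : l2 ≤ l1) (hpos : 0 < l2)
    (heig : Finset.univ.val.map hp.1.eigenvalues = ({l1, l2} : Multiset ℝ)) :
    Real.sqrt (Real.log l1 ^ 2 + Real.log l2 ^ 2) =
      Real.sqrt 2 * Real.log (p.trace / 2 + Real.sqrt ((p.trace / 2) ^ 2 - 1)) := by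
  have hprod : l1 * l2 = 1 := by
    simpa [heig, hdet, eq_comm] using hp.1.det_eq_multiset_prod_eigenvalues
  have htr : p.trace = l1 + l2 := by
    simpa [heig] using hp.1.trace_eq_multiset_sum_eigenvalues
  have hl1 : 1 ≤ l1 := by nlinarith
  obtain rfl : l2 = l1⁻¹ := eq_inv_of_mul_eq_one_right hprod
  change _ = Real.sqrt 2 * Real.arcosh (p.trace / 2)
  rw [htr, Real.arcosh_add_inv_div_two hl1, Real.log_inv, neg_sq, ← two_mul,
    Real.sqrt_mul zero_le_two, Real.sqrt_sq (Real.log_nonneg hl1)]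
end
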